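/- Let X ∈ {O, SO, R, E} and n > 0. If Step^X_n({End(w)}) ≠ Step^X_{n−1}({End(w)}), then there are pairwise distinct terms t₀, …, t_{n−1}, all different from w, such that adom(Step^X_n({End(w)})) = {t₀, …, t_{n−1}, w}, and the S₀-atoms of Step^X_n({End(w)}) are exactly {S₀(t_i, t_{i+1}) : 0 ≤ i < n}, where t_n denotes w. -/

import Mathlib

/-!
By induction on `n`, `Step^X_n({End(w)})` consists of `End(w)`, an `S₀`-path
`x_n → ⋯ → x_1 → x_0 = w` through fresh variables, and atoms over these terms with predicates other
than `S₀` and `End`. The Datalog rules create neither terms nor `S₀`- or `End`-atoms, and such an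
instance is rigid: every endomorphism fixes the constant `w`, hence, edge by edge, the whole path.
So for each chase variant a Datalog trigger that is not applicable is already satisfied, and a
fair Datalog chase ends in a fixpoint. Rule (9) needs `End(z)`, forcing `z = w`, and `G(y, w)`
with `y` on the path; only `y = x_n` gives something new. Hence each step either adds exactly
the edge `S₀(x_{n+1}, x_n)` or changes nothing, and after a step that changes nothing no later
step changes anything.
-/

set_option maxHeartbeats 1000000
set_option synthInstance.maxHeartbeats 1000000
set_option synthInstance.maxSize 512

attribute [local instance] Classical.propDecidable

noncomputable section

/-! ### Terms and atoms -/

/-- Variables: ordinary variables `Sum.inl n`, or fresh variables `Sum.inr (c, k)`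
introduced by the trigger with code `c` for the head variable with code `k`. -/
abbrev Var : Type := ℕ ⊕ (ℕ × ℕ)

/-- Terms: constants `Sum.inl c` or variables `Sum.inr v`. -/
abbrev FTerm : Type := ℕ ⊕ Var

def ct (n : ℕ) : FTerm := Sum.inl n
def vt (n : ℕ) : FTerm := Sum.inr (Sum.inl n)

/-- An atom: a predicate name together with its list of arguments. -/
abbrev Atom : Type := ℕ × List FTerm

/-- Active domain: all terms occurring in an atom set. -/
def adom (J : Set Atom) : Set FTerm := {t | ∃ a ∈ J, t ∈ a.2}

def atomVarsF (a : Atom) : Finset Var := (a.2.filterMap Sum.getRight?).toFinset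

def varsF (A : Finset Atom) : Finset Var := A.biUnion atomVarsF

def setVars (J : Set Atom) : Set Var := {v | ∃ a ∈ J, Sum.inr v ∈ a.2}

/-! ### Substitutions and homomorphisms -/

abbrev Subst := Var → FTerm

def applyT (σ : Subst) : FTerm → FTerm
  | Sum.inl c => Sum.inl c
  | Sum.inr v => σ v

def applyA (σ : Subst) (a : Atom) : Atom := (a.1, a.2.map (applyT σ))

def IsHomOn (σ : Subst) (A B : Set Atom) : Prop := ∀ a ∈ A, applyA σ a ∈ B

def HomBetween (A B : Set Atom) : Prop := ∃ σ : Subst, IsHomOn σ A B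

def IsRetraction (σ : Subst) (A B : Set Atom) : Prop :=
  IsHomOn σ A B ∧ ∀ v ∈ setVars A ∩ setVars B, σ v = Sum.inr v

/-- Isomorphism of atom sets: a pair of mutually inverse homomorphisms. -/
def Isomorphic (A B : Set Atom) : Prop :=
  ∃ σ τ : Subst, IsHomOn σ A B ∧ IsHomOn τ B A ∧
    (∀ a ∈ A, applyA τ (applyA σ a) = a) ∧ (∀ b ∈ B, applyA σ (applyA τ b) = b)

/-! ### Rules -/

/-- A rule is a pair (body, head). Its existential variables are the head variables
not occurring in the body; its frontier the variables shared by body and head.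
A rule is Datalog when every head variable occurs in the body. -/
abbrev Rule : Type := Finset Atom × Finset Atom

def frontierOf (R : Rule) : Finset Var := varsF R.1 ∩ varsF R.2

def DatRules (Rset : Finset Rule) : Finset Rule := Rset.filter fun R => varsF R.2 ⊆ varsF R.1
def NDatRules (Rset : Finset Rule) : Finset Rule := Rset.filter fun R => ¬ varsF R.2 ⊆ varsF R.1

/-- Satisfaction of a rule in an atom set. -/
def SatisfiesRule (J : Set Atom) (R : Rule) : Prop :=
  ∀ σ : Subst, IsHomOn σ (R.1 : Set Atom) J →
    ∃ σ' : Subst, (∀ v ∈ varsF R.1, σ' v = σ v) ∧ IsHomOn σ' (R.2 : Set Atom) J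

def IsModel (Rset : Finset Rule) (I J : Set Atom) : Prop :=
  (∀ R ∈ Rset, SatisfiesRule J R) ∧ HomBetween I J

/-- BCQ entailment: every model of the KB satisfies the query. -/
def Entails (Rset : Finset Rule) (I q : Set Atom) : Prop :=
  ∀ J : Set Atom, IsModel Rset I J → HomBetween q J

def IsUniversalModel (Rset : Finset Rule) (I U : Set Atom) : Prop :=
  IsModel Rset I U ∧ ∀ J : Set Atom, IsModel Rset I J → HomBetween U J

/-! ### Triggers -/

structure Trigger where
  rule : Rule
  sub : Subst

/-- Injective code of a trigger (a trigger is determined by its rule and the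
restriction of its substitution to the body variables). -/
def Trigger.code (t : Trigger) : ℕ :=
  Encodable.encode (t.rule, (varsF t.rule.1).image fun v => (v, t.sub v))

/-- The canonical extension of the trigger substitution, mapping each existential
variable `z` to the fresh variable unique for `z` and the trigger. -/
def Trigger.extSub (t : Trigger) : Subst := fun v =>
  if v ∈ varsF t.rule.1 then t.sub v
  else Sum.inr (Sum.inr (t.code, Encodable.encode v))

def Trigger.out (t : Trigger) : Finset Atom := t.rule.2.image (applyA t.extSub)

def Trigger.isOn (t : Trigger) (J : Set Atom) : Prop := IsHomOn t.sub (t.rule.1 : Set Atom) J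

/-! ### Chase variants, derivations, chase termination classes -/

inductive ChaseVariant : Type
  | O | SO | R | E
deriving DecidableEq

def Applicable : ChaseVariant → Trigger → Set Atom → Prop
  | .O, t, J => ¬ ((t.out : Set Atom) ⊆ J)
  | .SO, t, J => ∀ t' : Trigger, t'.rule = t.rule → t'.isOn J →
      (∀ v ∈ frontierOf t.rule, t'.sub v = t.sub v) → ¬ ((t'.out : Set Atom) ⊆ J)
  | .R, t, J => ¬ ∃ σ : Subst, IsRetraction σ (J ∪ (t.out : Set Atom)) J
  | .E, t, J => ¬ ∃ σ : Subst, IsHomOn σ (J ∪ (t.out : Set Atom)) J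

def instSeq (I : Set Atom) (steps : ℕ → Option Trigger) : ℕ → Set Atom
  | 0 => I
  | n + 1 => instSeq I steps n ∪
      (match steps n with
        | none => (∅ : Set Atom)
        | some t => (t.out : Set Atom))

/-- A (possibly infinite) derivation from the knowledge base `⟨Rset, I⟩`. -/
structure Deriv (Rset : Finset Rule) (I : Set Atom) where
  steps : ℕ → Option Trigger
  prefix_closed : ∀ n, steps n = none → steps (n + 1) = none
  valid : ∀ n t, steps n = some t →
    t.rule ∈ Rset ∧ t.isOn (instSeq I steps n) ∧ ¬ ((t.out : Set Atom) ⊆ instSeq I steps n)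

def Deriv.inst {Rset : Finset Rule} {I : Set Atom} (D : Deriv Rset I) (n : ℕ) :
    Set Atom := instSeq I D.steps n

def Deriv.res {Rset : Finset Rule} {I : Set Atom} (D : Deriv Rset I) : Set Atom :=
  ⋃ n, D.inst n

def Deriv.Finite {Rset : Finset Rule} {I : Set Atom} (D : Deriv Rset I) : Prop :=
  ∃ n, D.steps n = none

def Deriv.IsX {Rset : Finset Rule} {I : Set Atom} (X : ChaseVariant)
    (D : Deriv Rset I) : Prop :=
  ∀ n t, D.steps n = some t → Applicable X t (D.inst n)

def Deriv.Fair {Rset : Finset Rule} {I : Set Atom} (X : ChaseVariant)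
    (D : Deriv Rset I) : Prop :=
  ∀ i, ∀ t : Trigger, t.rule ∈ Rset → t.isOn (D.inst i) → Applicable X t (D.inst i) →
    ∃ j, i < j ∧ ¬ Applicable X t (D.inst j)

/-- All-instance, all-derivation chase termination. -/
def CTall (X : ChaseVariant) (Rset : Finset Rule) : Prop :=
  ∀ I : Finset Atom, ∀ D : Deriv Rset (I : Set Atom), D.IsX X → D.Fair X → D.Finite

/-- All-instance, some-derivation chase termination. -/
def CTex (X : ChaseVariant) (Rset : Finset Rule) : Prop :=
  ∀ I : Finset Atom, ∃ D : Deriv Rset (I : Set Atom), D.IsX X ∧ D.Fair X ∧ D.Finite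

inductive CTQuant : Type
  | all | ex

def CT (X : ChaseVariant) : CTQuant → Finset Rule → Prop
  | .all => CTall X
  | .ex => CTex X

/-- The result of some fair `X`-derivation from `⟨Rset, J⟩`. -/
def ChX (X : ChaseVariant) (Rset : Finset Rule) (J : Set Atom) : Set Atom :=
  if h : ∃ D : Deriv Rset J, D.IsX X ∧ D.Fair X then h.choose.res else J

/-! ### Gaifman graph, treewidth, bts -/

def gaifmanAdj (J : Set Atom) (u v : FTerm) : Prop :=
  u ≠ v ∧ ∃ a ∈ J, u ∈ a.2 ∧ v ∈ a.2

/-- The (Gaifman graph of the) atom set `J` has treewidth at most `k`: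
there is a tree decomposition all of whose bags have size at most `k + 1`. -/
def TreewidthAtMost (J : Set Atom) (k : ℕ) : Prop :=
  ∃ (ι : Type) (T : SimpleGraph ι) (bag : ι → Finset FTerm),
    T.Connected ∧ T.IsAcyclic ∧
    (∀ v ∈ adom J, ∃ i, v ∈ bag i) ∧
    (∀ u v : FTerm, gaifmanAdj J u v → ∃ i, u ∈ bag i ∧ v ∈ bag i) ∧
    (∀ v : FTerm, (SimpleGraph.induce {i | v ∈ bag i} T).Preconnected) ∧
    (∀ i, (bag i).card ≤ k + 1)

/-- Bounded-treewidth sets: for every instance, some universal model of bounded treewidth. -/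
def IsBts (Rset : Finset Rule) : Prop :=
  ∀ I : Finset Atom, ∃ (k : ℕ) (U : Set Atom),
    IsUniversalModel Rset (I : Set Atom) U ∧ TreewidthAtMost U k

/-! ### Three-counter machines -/

/-- A three-counter machine: states `0, …, m − 1` (state `0` is initial, standing for `q₁`),
and a partial transition function given by a finite table. -/
structure TCM where
  m : ℕ
  hm : 0 < m
  δ : List ((ℕ × Bool × Bool) × (ℕ × Int × Int))
  keys_nodup : (δ.map Prod.fst).Nodup
  wf : ∀ e ∈ δ, e.1.1 < m ∧ e.2.1 < m ∧ e.2.2.1.natAbs ≤ 1 ∧ e.2.2.2.natAbs ≤ 1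

/-- A configuration: state, two counters, and the time counter. -/
abbrev Config : Type := ℕ × ℕ × ℕ × ℕ

def TCM.step (M : TCM) (q : ℕ) (b1 b2 : Bool) : Option (ℕ × Int × Int) :=
  (M.δ.find? fun e => decide (e.1 = (q, b1, b2))).map Prod.snd

def TCM.next (M : TCM) (C : Config) : Option Config :=
  match M.step C.1 (decide (C.2.1 ≠ 0)) (decide (C.2.2.1 ≠ 0)) with
  | none => none
  | some (q', d1, d2) =>
      some (q', ((C.2.1 : ℤ) + d1).toNat, ((C.2.2.1 : ℤ) + d2).toNat, C.2.2.2 + 1)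

def TCM.run (M : TCM) : ℕ → Option Config
  | 0 => some (0, 0, 0, 0)
  | n + 1 => (M.run n).bind M.next

/-- The machine halts: some reachable configuration has no successor. -/
def TCM.Halts (M : TCM) : Prop := ∃ n C, M.run n = some C ∧ M.next C = none

/-! ### Prime encoding of configurations -/

/-- The least prime strictly greater than `n` (computably). -/
def nextPrime (n : ℕ) : ℕ := Nat.find (Nat.exists_infinite_primes (n + 1))

/-- `prm i` is the `(i+1)`-st prime `p_{i+1}`, i.e. `prm 0 = 2`. -/
def prm : ℕ → ℕ
  | 0 => 2
  | k + 1 => nextPrime (prm k)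

/-- Encoding of a configuration as a natural number. -/
def TCM.enc (M : TCM) (C : Config) : ℕ :=
  prm C.1 * prm M.m ^ C.2.1 * prm (M.m + 1) ^ C.2.2.1 * prm (M.m + 2) ^ C.2.2.2

/-- `p = p₁ ⋯ p_{m+3}`. -/
def TCM.p (M : TCM) : ℕ := ∏ i ∈ Finset.range (M.m + 3), prm i

/-- Decode the state from a residue modulo `M.p`. -/
def TCM.stateOf (M : TCM) (i : ℕ) : Option ℕ :=
  (List.range M.m).find? fun s => decide (prm s ∣ i)

/-- The canonical pair `(q_i, r_i)` realizing the prime encoding of the transitions. -/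
def TCM.qr (M : TCM) (i : ℕ) : ℕ × ℕ :=
  match M.stateOf i with
  | none => (1, 1)
  | some s =>
      let b1 : Bool := decide (prm M.m ∣ i)
      let b2 : Bool := decide (prm (M.m + 1) ∣ i)
      match M.step s b1 b2 with
      | none => (1, 1)
      | some (s', d1, d2) =>
          let e1 : ℤ := if b1 then d1 else max d1 0
          let e2 : ℤ := if b2 then d2 else max d2 0
          let num : ℕ := prm s' * prm (M.m + 2) *
            (if e1 = 1 then prm M.m else 1) * (if e2 = 1 then prm (M.m + 1) else 1)
          let den : ℕ := prm s *
            (if e1 = -1 then prm M.m else 1) * (if e2 = -1 then prm (M.m + 1) else 1)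
          (num / Nat.gcd num den, den / Nat.gcd num den)

def TCM.qi (M : TCM) (i : ℕ) : ℕ := (M.qr i).1
def TCM.ri (M : TCM) (i : ℕ) : ℕ := (M.qr i).2

/-- `g(n) = q_{n mod p} · n / r_{n mod p}`. -/
def TCM.g (M : TCM) (n : ℕ) : ℕ := M.qi (n % M.p) * n / M.ri (n % M.p)

/-- `gᵏ(2)`. -/
def TCM.gIter (M : TCM) (k : ℕ) : ℕ := (M.g)^[k] 2

/-- `G = {gᵏ(2) : k ∈ ℕ}`. -/
def TCM.Gset (M : TCM) : Set ℕ := Set.range M.gIter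

/-! ### The rule set `R_M` -/

def pEnd : ℕ := 0
def pFlood : ℕ := 1
def pS0 : ℕ := 2
def pS : ℕ := 3
def pG : ℕ := 4
def pR (i : ℕ) : ℕ := 5 + 2 * i
def pT (i : ℕ) : ℕ := 6 + 2 * i

/-- `j`-th vertex of an `S`-path of length `n` from variable `a` to variable `b`
with fresh intermediate variables `base + 1, …, base + n − 1`. -/
def pathVar (a b base n j : ℕ) : FTerm :=
  if j = 0 then vt a else if j = n then vt b else vt (base + j)

/-- The atoms of `Sⁿ(x_a, x_b)`: an `S`-path of length `n`. -/
def spath (a b base n : ℕ) : Finset Atom :=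
  (Finset.range n).image fun j =>
    (pS, [pathVar a b base n j, pathVar a b base n (j + 1)])

/-- Rule (1): `S₀(x,y) → S(x,y)`. -/
def ruleS : Rule := ({(pS0, [vt 0, vt 1])}, {(pS, [vt 0, vt 1])})

/-- Rule (2): `R_i(x,y) ∧ S(y,z) → R_{i+1}(x,z)` (indices modulo `p`). -/
def ruleR (M : TCM) (i : ℕ) : Rule :=
  ({(pR i, [vt 0, vt 1]), (pS, [vt 1, vt 2])}, {(pR ((i + 1) % M.p), [vt 0, vt 2])})

/-- Rule (3): `T_i(x,y,z) ∧ S^{r_i}(y,y′) ∧ S^{q_i}(z,z′) → T_i(x,y′,z′)`. -/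
def ruleT (M : TCM) (i : ℕ) : Rule :=
  (({(pT i, [vt 0, vt 1, vt 2])} : Finset Atom) ∪ spath 1 3 10 (M.ri i) ∪
      spath 2 4 (11 + M.ri i) (M.qi i),
    {(pT i, [vt 0, vt 3, vt 4])})

/-- Rule (4): `S(x,y) → Flood(y)`. -/
def ruleFloodProp : Rule := ({(pS, [vt 0, vt 1])}, {(pFlood, [vt 1])})

/-- Rule (5): `End(x) → S(x,x)`. -/
def ruleSEnd : Rule := ({(pEnd, [vt 0])}, {(pS, [vt 0, vt 0])})

/-- Rule (6): `S²(x,y) → G(x,y)`. -/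
def ruleGInit : Rule := (spath 0 1 10 2, {(pG, [vt 0, vt 1])})

/-- Rule (7): `G(x,y) ∧ R_i(x,y) ∧ T_i(x,y,z) → G(x,z)`. -/
def ruleGStep (i : ℕ) : Rule :=
  ({(pG, [vt 0, vt 1]), (pR i, [vt 0, vt 1]), (pT i, [vt 0, vt 1, vt 2])},
    {(pG, [vt 0, vt 2])})

/-- Rule (8): `Flood(x) ∧ Flood(y) ∧ Flood(z) → G(x,y) ∧ ⋀_{j<p} (R_j(x,y) ∧ T_j(x,y,z))`. -/
def ruleFloodGen (M : TCM) : Rule :=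
  ({(pFlood, [vt 0]), (pFlood, [vt 1]), (pFlood, [vt 2])},
    ({(pG, [vt 0, vt 1])} : Finset Atom) ∪
      (Finset.range M.p).biUnion fun j =>
        {(pR j, [vt 0, vt 1]), (pT j, [vt 0, vt 1, vt 2])})

/-- Rule (9): `G(y,z) ∧ End(z) → ∃x (S₀(x,y) ∧ R₀(x,x) ∧ ⋀_{j<p} T_j(x,x,x))`. -/
def ruleEx (M : TCM) : Rule :=
  ({(pG, [vt 1, vt 2]), (pEnd, [vt 2])},
    ({(pS0, [vt 0, vt 1]), (pR 0, [vt 0, vt 0])} : Finset Atom) ∪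
      (Finset.range M.p).biUnion fun j => {(pT j, [vt 0, vt 0, vt 0])})

/-- The rule set `R_M`. -/
def RM (M : TCM) : Finset Rule :=
  ({ruleS, ruleFloodProp, ruleSEnd, ruleGInit, ruleFloodGen M, ruleEx M} : Finset Rule) ∪
    (Finset.range M.p).biUnion fun i => {ruleR M i, ruleT M i, ruleGStep i}

/-- The alternating Datalog/non-Datalog chase steps `Step^X_n`. -/
def StepX (X : ChaseVariant) (M : TCM) : ℕ → Set Atom → Set Atom
  | 0, I => ChX X (DatRules (RM M)) I
  | n + 1, I => ChX X (DatRules (RM M)) (ChX X (NDatRules (RM M)) (StepX X M n I))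

/-- The constant `w`, the "well of positivity". -/
def wC : FTerm := ct 0

/-- The instance `{End(w)}`. -/
def IE : Set Atom := {(pEnd, [wC])}

/-- Membership in the signature of `R_M` (predicate together with its arity). -/
def InSig (M : TCM) (a : Atom) : Prop :=
  ((a.1 = pEnd ∨ a.1 = pFlood) ∧ a.2.length = 1) ∨
  ((a.1 = pS0 ∨ a.1 = pS ∨ a.1 = pG ∨ ∃ i < M.p, a.1 = pR i) ∧ a.2.length = 2) ∨
  ((∃ i < M.p, a.1 = pT i) ∧ a.2.length = 3)

/-- The critical instance: all atoms `P(w, …, w)` over the signature of `R_M`. -/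
def Crit (M : TCM) : Set Atom := {a | InSig M a ∧ ∀ t ∈ a.2, t = wC}

/-- An `S`-path of length `k` from `s` to `t` in `J`. -/
def SPath (J : Set Atom) : ℕ → FTerm → FTerm → Prop
  | 0, s, t => s = t
  | k + 1, s, t => ∃ u, (pS, [s, u]) ∈ J ∧ SPath J k u t

/-- The restriction `J|_S`: atoms of `J` all of whose terms belong to `S`. -/
def restrictTo (J : Set Atom) (S : Set FTerm) : Set Atom := {a ∈ J | ∀ t ∈ a.2, t ∈ S}

/-- An explicit injective encoding of three-counter machines by natural numbers. -/
def encodeTCM (M : TCM) : ℕ := Encodable.encode (M.m, M.δ)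

lemma mem_atomVarsF {v : Var} {a : Atom} : v ∈ atomVarsF a ↔ Sum.inr v ∈ a.2 := by
  simp [atomVarsF]

lemma mem_varsF {v : Var} {A : Finset Atom} : v ∈ varsF A ↔ ∃ a ∈ A, Sum.inr v ∈ a.2 := by
  simp [varsF, mem_atomVarsF]

lemma adom_mono {J K : Set Atom} (h : J ⊆ K) : adom J ⊆ adom K :=
  fun _ ⟨a, ha, hta⟩ => ⟨a, h ha, hta⟩

lemma setVars_mono {J K : Set Atom} (h : J ⊆ K) : setVars J ⊆ setVars K :=
  fun _ ⟨a, ha, hva⟩ => ⟨a, h ha, hva⟩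

lemma adom_union (J K : Set Atom) : adom (J ∪ K) = adom J ∪ adom K := by
  ext; simp only [adom, Set.mem_union, Set.mem_ofPred_eq, or_and_right, exists_or]

lemma IsHomOn.mono {σ : Subst} {A A' B B' : Set Atom} (h : IsHomOn σ A B) (hA : A' ⊆ A)
    (hB : B ⊆ B') : IsHomOn σ A' B' :=
  fun a ha => hB (h a (hA ha))

lemma IsHomOn.apply_mem_adom {σ : Subst} {A : Finset Atom} {J : Set Atom}
    (h : IsHomOn σ (A : Set Atom) J) {v : Var} (hv : v ∈ varsF A) : σ v ∈ adom J := by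
  obtain ⟨a, ha, hva⟩ := mem_varsF.1 hv
  exact ⟨applyA σ a, h a ha, List.mem_map_of_mem (f := applyT σ) hva⟩

def ClosedUnder (Rset : Finset Rule) (J : Set Atom) : Prop :=
  ∀ t : Trigger, t.rule ∈ Rset → t.isOn J → (t.out : Set Atom) ⊆ J

namespace Deriv

variable {Rset : Finset Rule} {I : Set Atom} (D : Deriv Rset I)

lemma inst_succ_of_none {n : ℕ} (h : D.steps n = none) : D.inst (n + 1) = D.inst n := by
  simp [inst, instSeq, h]

lemma inst_succ_of_some {n : ℕ} {t : Trigger} (h : D.steps n = some t) :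
    D.inst (n + 1) = D.inst n ∪ t.out := by
  simp [inst, instSeq, h]

lemma inst_mono : Monotone D.inst := by
  refine monotone_nat_of_le_succ fun n => ?_
  cases h : D.steps n with
  | none => rw [D.inst_succ_of_none h]
  | some t => rw [D.inst_succ_of_some h]; exact Set.subset_union_left

lemma inst_subset_res (n : ℕ) : D.inst n ⊆ D.res := Set.subset_iUnion D.inst n

lemma subset_res : I ⊆ D.res := D.inst_subset_res 0

lemma res_eq_of_forall_none (h : ∀ n, D.steps n = none) : D.res = I := by
  have hinst : ∀ n, D.inst n = I := fun n => by
    induction n with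
    | zero => rfl
    | succ n ih => rw [D.inst_succ_of_none (h n), ih]
  simp only [res, hinst, Set.iUnion_const]

lemma res_subset {B : Set Atom} (hI : I ⊆ B)
    (hstep : ∀ n t, D.steps n = some t → D.inst n ⊆ B → (t.out : Set Atom) ⊆ B) :
    D.res ⊆ B := by
  refine Set.iUnion_subset fun n => ?_
  induction n with
  | zero => exact hI
  | succ n ih =>
    cases h : D.steps n with
    | none => rwa [D.inst_succ_of_none h]
    | some t => rw [D.inst_succ_of_some h]; exact Set.union_subset ih (hstep n t h ih)

lemma res_subset_of_closedUnder {B : Set Atom} (hI : I ⊆ B) (hB : ClosedUnder Rset B) :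
    D.res ⊆ B :=
  D.res_subset hI fun n t h hsub => hB t (D.valid n t h).1 ((D.valid n t h).2.1.mono le_rfl hsub)

lemma exists_isOn_inst {t : Trigger} (ht : t.isOn D.res) : ∃ n, t.isOn (D.inst n) := by
  have hbody : ((t.rule.1.image (applyA t.sub) : Finset Atom) : Set Atom) ⊆ ⋃ n, D.inst n := by
    intro a ha
    obtain ⟨b, hb, rfl⟩ := Finset.mem_image.1 ha
    exact ht b hb
  obtain ⟨n, hn⟩ := D.inst_mono.directed_le.exists_mem_subset_of_finset_subset_biUnion hbody
  exact ⟨n, fun b hb => hn (Finset.mem_image_of_mem _ hb)⟩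

lemma closedUnder_res {X : ChaseVariant} (hfair : D.Fair X)
    (hsat : ∀ n t, t.rule ∈ Rset → t.isOn (D.inst n) → ¬ Applicable X t (D.inst n) →
      (t.out : Set Atom) ⊆ D.inst n) :
    ClosedUnder Rset D.res := by
  intro t hR hon
  obtain ⟨n, hn⟩ := D.exists_isOn_inst hon
  have hsat' : ∀ m, n ≤ m → ¬ Applicable X t (D.inst m) → (t.out : Set Atom) ⊆ D.res :=
    fun m hm hna => (hsat m t hR (hn.mono le_rfl (D.inst_mono hm)) hna).trans (D.inst_subset_res m)
  by_cases happ : Applicable X t (D.inst n)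
  · obtain ⟨m, hm, hna⟩ := hfair n t hR hn happ
    exact hsat' m hm.le hna
  · exact hsat' n le_rfl happ

end Deriv

lemma ChX_eq_self_or_res (X : ChaseVariant) (Rset : Finset Rule) (J : Set Atom) :
    ChX X Rset J = J ∨ ∃ D : Deriv Rset J, D.Fair X ∧ ChX X Rset J = D.res := by
  unfold ChX
  split_ifs with h
  · exact Or.inr ⟨h.choose, h.choose_spec.2, rfl⟩
  · exact Or.inl rfl

lemma ChX_eq_self_of_closedUnder {X : ChaseVariant} {Rset : Finset Rule} {J : Set Atom}
    (h : ClosedUnder Rset J) : ChX X Rset J = J := by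
  obtain hJ | ⟨D, -, hD⟩ := ChX_eq_self_or_res X Rset J
  · exact hJ
  · rw [hD]; exact (D.res_subset_of_closedUnder le_rfl h).antisymm D.subset_res

lemma applyT_eq_self_of_mem_adom {σ : Subst} {J : Set Atom}
    (hσ : ∀ v ∈ setVars J, σ v = Sum.inr v) {u : FTerm} (hu : u ∈ adom J) : applyT σ u = u := by
  cases u with
  | inl c => rfl
  | inr v => exact hσ v hu

def Rigid (K : Set Atom) : Prop :=
  ∀ σ : Subst, IsHomOn σ K K → ∀ v ∈ setVars K, σ v = Sum.inr v

namespace Trigger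

lemma extSub_of_mem {t : Trigger} {v : Var} (hv : v ∈ varsF t.rule.1) : t.extSub v = t.sub v :=
  if_pos hv

lemma applyT_extSub_of_datalog {t : Trigger} (hdat : varsF t.rule.2 ⊆ varsF t.rule.1)
    {a : Atom} (ha : a ∈ t.rule.2) {u : FTerm} (hu : u ∈ a.2) :
    applyT t.extSub u = applyT t.sub u := by
  cases u with
  | inl c => rfl
  | inr v => exact extSub_of_mem (hdat (mem_varsF.2 ⟨a, ha, hu⟩))

lemma out_eq_of_datalog {t : Trigger} (hdat : varsF t.rule.2 ⊆ varsF t.rule.1) :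
    t.out = t.rule.2.image (applyA t.sub) :=
  Finset.image_congr fun _ ha => Prod.ext rfl
    (List.map_congr_left fun _ hu => applyT_extSub_of_datalog hdat ha hu)

lemma out_eq_of_frontier {t t' : Trigger} (hr : t'.rule = t.rule)
    (hdat : varsF t.rule.2 ⊆ varsF t.rule.1)
    (hfr : ∀ v ∈ frontierOf t.rule, t'.sub v = t.sub v) : t'.out = t.out := by
  rw [out_eq_of_datalog hdat, out_eq_of_datalog (hr ▸ hdat), hr]
  refine Finset.image_congr fun a ha => Prod.ext rfl (List.map_congr_left fun u hu => ?_)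
  cases u with
  | inl c => rfl
  | inr v =>
    have hv : v ∈ varsF t.rule.2 := mem_varsF.2 ⟨a, ha, hu⟩
    exact hfr v (Finset.mem_inter.2 ⟨hdat hv, hv⟩)

lemma applyA_out_eq_self {t : Trigger} {J : Set Atom} (hdat : varsF t.rule.2 ⊆ varsF t.rule.1)
    (hon : t.isOn J) {σ : Subst} (hσ : ∀ v ∈ setVars J, σ v = Sum.inr v) {a : Atom}
    (ha : a ∈ t.out) : applyA σ a = a := by
  rw [out_eq_of_datalog hdat] at ha
  obtain ⟨b, hb, rfl⟩ := Finset.mem_image.1 ha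
  refine Prod.ext rfl ?_
  simp only [applyA, List.map_map]
  refine List.map_congr_left fun u hu => ?_
  cases u with
  | inl c => rfl
  | inr v =>
    exact applyT_eq_self_of_mem_adom hσ (hon.apply_mem_adom (hdat (mem_varsF.2 ⟨b, hb, hu⟩)))

/-- A retraction onto `K`, and on a rigid `K` any homomorphism to `K`, fixes the output of a
Datalog trigger on `K`, so maps it into `K`. -/
lemma out_subset_of_not_applicable {X : ChaseVariant} {t : Trigger} {K : Set Atom}
    (hdat : varsF t.rule.2 ⊆ varsF t.rule.1) (hon : t.isOn K) (hK : Rigid K)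
    (hna : ¬ Applicable X t K) : (t.out : Set Atom) ⊆ K := by
  have hfix : ∀ σ : Subst, IsHomOn σ (K ∪ t.out) K → (∀ v ∈ setVars K, σ v = Sum.inr v) →
      (t.out : Set Atom) ⊆ K := fun σ hσ hid a ha =>
    applyA_out_eq_self hdat hon hid ha ▸ hσ a (Or.inr ha)
  cases X with
  | O => simpa [Applicable] using hna
  | SO =>
    simp only [Applicable, not_forall, not_not] at hna
    obtain ⟨t', hr, -, hfr, hout⟩ := hna
    rwa [← out_eq_of_frontier hr hdat hfr]
  | R =>
    simp only [Applicable, not_not] at hna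
    obtain ⟨σ, hσ, hid⟩ := hna
    exact hfix σ hσ fun v hv => hid v ⟨setVars_mono Set.subset_union_left hv, hv⟩
  | E =>
    simp only [Applicable, not_not] at hna
    obtain ⟨σ, hσ⟩ := hna
    exact hfix σ hσ (hK σ (hσ.mono Set.subset_union_left le_rfl))

end Trigger

section Rules

variable {M : TCM}

lemma mem_RM {R : Rule} : R ∈ RM M ↔
    R = ruleS ∨ R = ruleFloodProp ∨ R = ruleSEnd ∨ R = ruleGInit ∨ R = ruleFloodGen M ∨
      R = ruleEx M ∨ ∃ i < M.p, R = ruleR M i ∨ R = ruleT M i ∨ R = ruleGStep i := by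
  simp only [RM, Finset.mem_union, Finset.mem_insert, Finset.mem_singleton,
    Finset.mem_biUnion, Finset.mem_range, or_assoc]

lemma ruleEx_mem_RM : ruleEx M ∈ RM M := mem_RM.2 (by tauto)

lemma prime_prm (k : ℕ) : (prm k).Prime := by
  cases k with
  | zero => exact Nat.prime_two
  | succ k => exact (Nat.find_spec (Nat.exists_infinite_primes (prm k + 1))).2

lemma qr_pos (M : TCM) (i : ℕ) : 0 < (M.qr i).1 ∧ 0 < (M.qr i).2 := by
  have hpos : ∀ {a b : ℕ}, 0 < a → 0 < b → 0 < a / a.gcd b ∧ 0 < b / a.gcd b := fun ha hb =>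
    ⟨Nat.div_pos (Nat.gcd_le_left _ ha) (Nat.gcd_pos_of_pos_left _ ha),
      Nat.div_pos (Nat.gcd_le_right _ hb) (Nat.gcd_pos_of_pos_left _ ha)⟩
  unfold TCM.qr
  split
  · simp
  · simp only
    split
    · simp
    · have hne : ∀ k, prm k ≠ 0 := fun k => (prime_prm k).ne_zero
      apply hpos <;> split_ifs <;> simp [Nat.pos_iff_ne_zero, hne]

lemma qi_pos (M : TCM) (i : ℕ) : 0 < M.qi i := (qr_pos M i).1

lemma ri_pos (M : TCM) (i : ℕ) : 0 < M.ri i := (qr_pos M i).2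

lemma right_mem_varsF_spath {a b base n : ℕ} (hn : 0 < n) :
    Sum.inl b ∈ varsF (spath a b base n) := by
  refine mem_varsF.2 ⟨(pS, [pathVar a b base n (n - 1), pathVar a b base n n]), ?_, ?_⟩
  · exact Finset.mem_image.2 ⟨n - 1, Finset.mem_range.2 (by omega), by rw [Nat.sub_add_cancel hn]⟩
  · simp [pathVar, vt, hn.ne']

lemma varsF_mono {A B : Finset Atom} (h : A ⊆ B) : varsF A ⊆ varsF B :=
  Finset.biUnion_subset_biUnion_of_subset_left _ h

lemma ruleT_datalog (i : ℕ) : varsF (ruleT M i).2 ⊆ varsF (ruleT M i).1 := by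
  intro v hv
  obtain ⟨a, ha, hva⟩ := mem_varsF.1 hv
  simp only [ruleT, Finset.mem_singleton] at ha
  subst ha
  simp only [vt, List.mem_cons, Sum.inr.injEq, List.not_mem_nil, or_false] at hva
  rcases hva with rfl | rfl | rfl
  · exact varsF_mono (Finset.subset_union_left.trans Finset.subset_union_left)
      (mem_varsF.2 ⟨_, Finset.mem_singleton_self _, by simp [vt]⟩)
  · exact varsF_mono (Finset.subset_union_right.trans Finset.subset_union_left)
      (right_mem_varsF_spath (ri_pos M i))
  · exact varsF_mono Finset.subset_union_right (right_mem_varsF_spath (qi_pos M i))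

lemma datalog_of_mem_RM {R : Rule} (hR : R ∈ RM M) (hne : R ≠ ruleEx M) :
    varsF R.2 ⊆ varsF R.1 := by
  rcases mem_RM.1 hR with rfl | rfl | rfl | rfl | rfl | rfl | ⟨i, -, rfl | rfl | rfl⟩
  · simp [ruleS, varsF, atomVarsF, vt]
  · simp [ruleFloodProp, varsF, atomVarsF, vt]
  · simp [ruleSEnd, varsF, atomVarsF, vt]
  · simp [ruleGInit, spath, pathVar, varsF, atomVarsF, vt]
    decide
  · simp [ruleFloodGen, varsF, atomVarsF, vt, Finset.biUnion_biUnion, Finset.insert_subset_iff]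
  · exact absurd rfl hne
  · simp [ruleR, varsF, atomVarsF, vt]
  · exact ruleT_datalog i
  · simp [ruleGStep, varsF, atomVarsF, vt]

lemma ruleEx_not_datalog : ¬ varsF (ruleEx M).2 ⊆ varsF (ruleEx M).1 := by
  simp [ruleEx, varsF, atomVarsF, vt, Finset.biUnion_biUnion, Finset.insert_subset_iff]

lemma mem_NDatRules {R : Rule} : R ∈ NDatRules (RM M) ↔ R = ruleEx M := by
  refine ⟨fun h => ?_, fun h => Finset.mem_filter.2 ⟨h ▸ ruleEx_mem_RM, h ▸ ruleEx_not_datalog⟩⟩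
  obtain ⟨hR, hnd⟩ := Finset.mem_filter.1 h
  by_contra hne
  exact hnd (datalog_of_mem_RM hR hne)

lemma head_of_mem_RM {R : Rule} (hR : R ∈ RM M) (hne : R ≠ ruleEx M) :
    ∀ a ∈ R.2, a.1 ≠ pS0 ∧ a.1 ≠ pEnd ∧ ∀ u ∈ a.2, ∃ v, u = Sum.inr v := by
  rcases mem_RM.1 hR with rfl | rfl | rfl | rfl | rfl | rfl | ⟨i, -, rfl | rfl | rfl⟩ <;>
    simp [ruleS, ruleFloodProp, ruleSEnd, ruleGInit, ruleFloodGen, ruleR, ruleT, ruleGStep, vt,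
      pS, pS0, pEnd, pFlood, pG, pR, pT] at hne ⊢ <;>
    first | omega | (rintro _ _ _ _ (⟨rfl, rfl⟩ | ⟨rfl, rfl⟩) <;> simp <;> omega)

lemma head_of_mem_DatRules {R : Rule} (hR : R ∈ DatRules (RM M)) :
    ∀ a ∈ R.2, a.1 ≠ pS0 ∧ a.1 ≠ pEnd ∧ ∀ u ∈ a.2, ∃ v ∈ varsF R.1, u = Sum.inr v := by
  obtain ⟨hRM, hdat⟩ := Finset.mem_filter.1 hR
  intro a ha
  obtain ⟨h0, hE, hvar⟩ :=
    head_of_mem_RM hRM (fun h => ruleEx_not_datalog (h ▸ hdat)) a ha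
  refine ⟨h0, hE, fun u hu => ?_⟩
  obtain ⟨v, rfl⟩ := hvar u hu
  exact ⟨v, hdat (mem_varsF.2 ⟨a, ha, hu⟩), rfl⟩

end Rules

section Chain

variable {M : TCM}

/-- `Trigger.code` of every trigger of rule (9) that maps `y` to `y` and `z` to `w`. -/
def codeEx (M : TCM) (y : FTerm) : ℕ :=
  Encodable.encode (ruleEx M, ({(Sum.inl 1, y), (Sum.inl 2, wC)} : Finset (Var × FTerm)))

def freshEx (M : TCM) (y : FTerm) : FTerm :=
  Sum.inr (Sum.inr (codeEx M y, Encodable.encode (Sum.inl 0 : Var)))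

/-- The terms `w = chain M 0, chain M 1, …` created by successive applications of rule (9). -/
def chain (M : TCM) : ℕ → FTerm
  | 0 => wC
  | j + 1 => freshEx M (chain M j)

def edge (M : TCM) (j : ℕ) : Atom := (pS0, [chain M (j + 1), chain M j])

def exOut (M : TCM) (y : FTerm) : Set Atom :=
  {a | a = (pS0, [freshEx M y, y]) ∨ a = (pR 0, [freshEx M y, freshEx M y]) ∨
    ∃ j < M.p, a = (pT j, [freshEx M y, freshEx M y, freshEx M y])}

lemma freshEx_ne_wC (y : FTerm) : freshEx M y ≠ wC := by simp [freshEx, wC, ct]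

lemma freshEx_injective : Function.Injective (freshEx M) := by
  intro y y' h
  have hcode := Encodable.encode_injective (Sum.inr.inj (Sum.inr.inj h) |> congrArg Prod.fst)
  simp only [Prod.mk.injEq, true_and] at hcode
  have hmem : ((Sum.inl 1 : Var), y) ∈ ({(Sum.inl 1, y'), (Sum.inl 2, wC)} : Finset _) :=
    hcode ▸ Finset.mem_insert_self _ _
  simpa using hmem

lemma chain_injective : Function.Injective (chain M) := by
  intro i
  induction i with
  | zero =>
    rintro (_ | j) h
    exacts [rfl, absurd h.symm (freshEx_ne_wC _)]
  | succ i ih =>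
    rintro (_ | j) h
    exacts [absurd h (freshEx_ne_wC _), congrArg _ (ih (freshEx_injective h))]

lemma mem_ruleEx_head {a : Atom} :
    a ∈ (ruleEx M).2 ↔ a = (pS0, [vt 0, vt 1]) ∨ a = (pR 0, [vt 0, vt 0]) ∨
      ∃ j < M.p, a = (pT j, [vt 0, vt 0, vt 0]) := by
  simp only [ruleEx, Finset.mem_union, Finset.mem_insert, Finset.mem_singleton,
    Finset.mem_biUnion, Finset.mem_range, or_assoc]

lemma out_ruleEx {t : Trigger} (ht : t.rule = ruleEx M) (hw : t.sub (Sum.inl 2) = wC) :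
    (t.out : Set Atom) = exOut M (t.sub (Sum.inl 1)) := by
  have hbody : varsF (ruleEx M).1 = {Sum.inl 1, Sum.inl 2} := by
    simp [ruleEx, varsF, atomVarsF, vt]
  have hcode : t.code = codeEx M (t.sub (Sum.inl 1)) := by
    simp only [Trigger.code, codeEx, ht, hbody, Finset.image_insert, Finset.image_singleton, hw]
  have h0 : t.extSub (Sum.inl 0) = freshEx M (t.sub (Sum.inl 1)) := by
    simp [Trigger.extSub, ht, hbody, hcode, freshEx]
  have h1 : t.extSub (Sum.inl 1) = t.sub (Sum.inl 1) := by
    simp [Trigger.extSub, ht, hbody]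
  ext a
  simp only [Trigger.out, ht, Finset.coe_image, Set.mem_image, Finset.mem_coe, mem_ruleEx_head]
  constructor
  · rintro ⟨b, rfl | rfl | ⟨j, hj, rfl⟩, rfl⟩
    · exact Or.inl (by simp [applyA, applyT, vt, h0, h1])
    · exact Or.inr (Or.inl (by simp [applyA, applyT, vt, h0]))
    · exact Or.inr (Or.inr ⟨j, hj, by simp [applyA, applyT, vt, h0]⟩)
  · rintro (rfl | rfl | ⟨j, hj, rfl⟩)
    · exact ⟨_, Or.inl rfl, by simp [applyA, applyT, vt, h0, h1]⟩
    · exact ⟨_, Or.inr (Or.inl rfl), by simp [applyA, applyT, vt, h0]⟩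
    · exact ⟨_, Or.inr (Or.inr ⟨j, hj, rfl⟩), by simp [applyA, applyT, vt, h0]⟩

lemma fst_ne_of_mem_exOut {a : Atom} {y : FTerm} (ha : a ∈ exOut M y) :
    a.1 ≠ pEnd ∧ a.1 ≠ pG := by
  rcases ha with rfl | rfl | ⟨j, -, rfl⟩ <;> simp only [pS0, pR, pT, pEnd, pG] <;> omega

lemma eq_of_mem_exOut_of_fst_eq {a : Atom} {y : FTerm} (ha : a ∈ exOut M y) (h : a.1 = pS0) :
    a = (pS0, [freshEx M y, y]) := by
  rcases ha with rfl | rfl | ⟨j, -, rfl⟩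
  · rfl
  all_goals simp only [pS0, pR, pT] at h; omega

lemma adom_exOut (y : FTerm) : adom (exOut M y) ⊆ {freshEx M y, y} := by
  rintro u ⟨a, rfl | rfl | ⟨j, -, rfl⟩, hu⟩ <;> simp_all

end Chain

/-- The invariant of `Step^X_k({End(w)})`, whose `S₀`-atoms form the path
`chain M k → ⋯ → chain M 0 = w`. -/
structure Shape (M : TCM) (k : ℕ) (K : Set Atom) : Prop where
  eq_of_fst_eq_pEnd : ∀ a ∈ K, a.1 = pEnd → a = (pEnd, [wC])
  end_mem : (pEnd, [wC]) ∈ K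
  exists_edge_of_fst_eq_pS0 : ∀ a ∈ K, a.1 = pS0 → ∃ j < k, a = edge M j
  edge_mem : ∀ j < k, edge M j ∈ K
  exists_chain_of_mem_adom : ∀ u ∈ adom K, ∃ j ≤ k, u = chain M j

namespace Shape

variable {M : TCM} {k : ℕ} {K : Set Atom}

lemma initial : Shape M 0 IE where
  eq_of_fst_eq_pEnd _ ha _ := ha
  end_mem := rfl
  exists_edge_of_fst_eq_pS0 a ha h := by rw [ha] at h; simp [pEnd, pS0] at h
  edge_mem _ h := absurd h (Nat.not_lt_zero _)
  exists_chain_of_mem_adom := by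
    rintro u ⟨a, rfl, hu⟩
    exact ⟨0, le_rfl, List.mem_singleton.1 hu⟩

lemma union_exOut (hK : Shape M k K) : Shape M (k + 1) (K ∪ exOut M (chain M k)) where
  eq_of_fst_eq_pEnd a ha h := ha.elim (hK.eq_of_fst_eq_pEnd a · h)
    fun ha => absurd h (fst_ne_of_mem_exOut ha).1
  end_mem := Or.inl hK.end_mem
  exists_edge_of_fst_eq_pS0 a ha h := by
    rcases ha with ha | ha
    · obtain ⟨j, hj, rfl⟩ := hK.exists_edge_of_fst_eq_pS0 a ha h
      exact ⟨j, by omega, rfl⟩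
    · exact ⟨k, by omega, eq_of_mem_exOut_of_fst_eq ha h⟩
  edge_mem j hj := by
    rcases Nat.lt_succ_iff_lt_or_eq.1 hj with hj | rfl
    · exact Or.inl (hK.edge_mem j hj)
    · exact Or.inr (Or.inl rfl)
  exists_chain_of_mem_adom u hu := by
    rcases (adom_union _ _ ▸ hu) with hu | hu
    · obtain ⟨j, hj, rfl⟩ := hK.exists_chain_of_mem_adom u hu
      exact ⟨j, by omega, rfl⟩
    · rcases adom_exOut _ hu with rfl | rfl
      exacts [⟨k + 1, le_rfl, rfl⟩, ⟨k, by omega, rfl⟩]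

/-- `w` is a constant, and the only `S₀`-atom ending in `chain M j` starts at `chain M (j + 1)`,
so an endomorphism fixes the chain term by term. -/
lemma rigid (hK : Shape M k K) : Rigid K := by
  intro σ hσ
  have hfix : ∀ j ≤ k, applyT σ (chain M j) = chain M j := by
    intro j hj
    induction j with
    | zero => rfl
    | succ j ih =>
      obtain ⟨j', -, he⟩ :=
        hK.exists_edge_of_fst_eq_pS0 _ (hσ _ (hK.edge_mem j hj)) rfl
      simp only [edge, applyA, List.map_cons, List.map_nil, ih (by omega), Prod.mk.injEq,
        List.cons.injEq, and_true, true_and] at he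
      rw [he.1, chain_injective he.2]
  intro v hv
  obtain ⟨j, hj, he⟩ := hK.exists_chain_of_mem_adom _ hv
  have := hfix j hj
  rwa [← he] at this

lemma adom_eq (hK : Shape M k K) : adom K = {u | ∃ j ≤ k, u = chain M j} := by
  refine Set.Subset.antisymm hK.exists_chain_of_mem_adom ?_
  rintro _ ⟨_ | j, hj, rfl⟩
  · exact ⟨_, hK.end_mem, List.mem_singleton_self _⟩
  · exact ⟨_, hK.edge_mem j hj, List.mem_cons_self⟩

lemma sep_fst_eq_pS0 (hK : Shape M k K) :
    {a ∈ K | a.1 = pS0} = {a | ∃ j < k, a = edge M j} := by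
  ext a
  refine ⟨fun ⟨ha, h⟩ => hK.exists_edge_of_fst_eq_pS0 a ha h, ?_⟩
  rintro ⟨j, hj, rfl⟩
  exact ⟨hK.edge_mem j hj, rfl⟩

end Shape

section Rounds

variable {M : TCM} {X : ChaseVariant} {k : ℕ}

/-- An over-approximation of what the Datalog rules of `R_M` derive from `A`. -/
def datalogBound (A : Set Atom) : Set Atom :=
  A ∪ {a | a.1 ≠ pS0 ∧ a.1 ≠ pEnd ∧ ∀ u ∈ a.2, u ∈ adom A}

lemma adom_datalogBound (A : Set Atom) : adom (datalogBound A) = adom A := by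
  refine (Set.Subset.antisymm ?_ (adom_mono Set.subset_union_left))
  rintro u ⟨a, ha | ha, hu⟩
  exacts [⟨a, ha, hu⟩, ha.2.2 u hu]

lemma closedUnder_datalogBound (A : Set Atom) :
    ClosedUnder (DatRules (RM M)) (datalogBound A) := by
  intro t hR hon a ha
  rw [Trigger.out, Finset.coe_image] at ha
  obtain ⟨b, hb, rfl⟩ := ha
  obtain ⟨h0, hE, hvar⟩ := head_of_mem_DatRules hR b hb
  refine Or.inr ⟨h0, hE, fun u hu => ?_⟩
  obtain ⟨u₀, hu₀, rfl⟩ := List.mem_map.1 hu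
  obtain ⟨v, hv, rfl⟩ := hvar u₀ hu₀
  rw [← adom_datalogBound, applyT, Trigger.extSub_of_mem hv]
  exact hon.apply_mem_adom hv

lemma Shape.of_subset_datalogBound {A K : Set Atom} (hA : Shape M k A) (hAK : A ⊆ K)
    (hK : K ⊆ datalogBound A) : Shape M k K where
  eq_of_fst_eq_pEnd a ha h := (hK ha).elim (hA.eq_of_fst_eq_pEnd a · h)
    fun ha => absurd h ha.2.1
  end_mem := hAK hA.end_mem
  exists_edge_of_fst_eq_pS0 a ha h := (hK ha).elim (hA.exists_edge_of_fst_eq_pS0 a · h)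
    fun ha => absurd h ha.1
  edge_mem j hj := hAK (hA.edge_mem j hj)
  exists_chain_of_mem_adom u hu :=
    hA.exists_chain_of_mem_adom u (adom_datalogBound A ▸ adom_mono hK hu)

/-- The intermediate instances are rigid, so a trigger that is not `X`-applicable is already
satisfied, and fairness closes the result under the Datalog rules. -/
lemma Shape.ChX_datRules {A : Set Atom} (hA : Shape M k A) :
    A ⊆ ChX X (DatRules (RM M)) A ∧ Shape M k (ChX X (DatRules (RM M)) A) ∧
      ChX X (DatRules (RM M)) (ChX X (DatRules (RM M)) A) = ChX X (DatRules (RM M)) A := by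
  rcases ChX_eq_self_or_res X (DatRules (RM M)) A with hC | ⟨D, hfair, hC⟩
  · rw [hC]
    exact ⟨le_rfl, hA, hC⟩
  rw [hC]
  have hbound := D.res_subset_of_closedUnder Set.subset_union_left (closedUnder_datalogBound A)
  have hshape : ∀ n, Shape M k (D.inst n) := fun n =>
    hA.of_subset_datalogBound (D.inst_mono (Nat.zero_le n)) ((D.inst_subset_res n).trans hbound)
  refine ⟨D.subset_res, hA.of_subset_datalogBound D.subset_res hbound,
    ChX_eq_self_of_closedUnder (D.closedUnder_res hfair fun n t hR hon hna => ?_)⟩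
  exact t.out_subset_of_not_applicable (Finset.mem_filter.1 hR).2 hon (hshape n).rigid hna

/-- The body atoms `End(z)` and `G(y, z)` cannot come from `exOut`, so `z = w` and `y` is a
chain term; every `y = chain M j` with `j < k` has been used already. -/
lemma out_eq_exOut_of_ruleEx {J B : Set Atom} {t : Trigger} (hJ : Shape M k J)
    (hOut : ∀ j < k, exOut M (chain M j) ⊆ J) (ht : t.rule = ruleEx M) (hon : t.isOn B)
    (hB : B ⊆ J ∪ exOut M (chain M k)) (hnew : ¬ (t.out : Set Atom) ⊆ J) :
    (t.out : Set Atom) = exOut M (chain M k) := by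
  have hbody : ∀ a ∈ (ruleEx M).1, applyA t.sub a ∈ J ∪ exOut M (chain M k) :=
    fun a ha => hB (hon a (ht ▸ ha))
  have hEnd := hbody (pEnd, [vt 2]) (by simp [ruleEx])
  have hG := hbody (pG, [vt 1, vt 2]) (by simp [ruleEx])
  simp only [applyA, applyT, vt, List.map_cons, List.map_nil] at hEnd hG
  have hw : t.sub (Sum.inl 2) = wC := by
    rcases hEnd with hEnd | hEnd
    · simpa using hJ.eq_of_fst_eq_pEnd _ hEnd rfl
    · exact absurd rfl (fst_ne_of_mem_exOut hEnd).1
  have hGJ : (pG, [t.sub (Sum.inl 1), wC]) ∈ J :=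
    (hw ▸ hG).resolve_right fun h => (fst_ne_of_mem_exOut h).2 rfl
  obtain ⟨j, hj, hy⟩ := hJ.exists_chain_of_mem_adom _ ⟨_, hGJ, List.mem_cons_self⟩
  rw [out_ruleEx ht hw, hy] at hnew ⊢
  obtain rfl : j = k := by
    by_contra hne
    exact hnew (hOut j (by omega))
  rfl

lemma Shape.ChX_nDatRules {J : Set Atom} (hJ : Shape M k J)
    (hOut : ∀ j < k, exOut M (chain M j) ⊆ J) :
    ChX X (NDatRules (RM M)) J = J ∨
      ChX X (NDatRules (RM M)) J = J ∪ exOut M (chain M k) := by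
  rcases ChX_eq_self_or_res X (NDatRules (RM M)) J with hC | ⟨D, -, hC⟩
  · exact Or.inl hC
  rw [hC]
  have hstep : ∀ n t, D.steps n = some t → D.inst n ⊆ J ∪ exOut M (chain M k) →
      (t.out : Set Atom) = exOut M (chain M k) := fun n t hs hsub =>
    have ⟨hR, hon, hnew⟩ := D.valid n t hs
    out_eq_exOut_of_ruleEx hJ hOut (mem_NDatRules.1 hR) hon hsub
      fun h => hnew (h.trans (D.inst_mono (Nat.zero_le n)))
  have hres := D.res_subset Set.subset_union_left fun n t hs hsub =>
    (hstep n t hs hsub).trans_subset Set.subset_union_right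
  by_cases hfired : ∃ n t, D.steps n = some t
  · obtain ⟨n, t, hs⟩ := hfired
    refine Or.inr (hres.antisymm (Set.union_subset D.subset_res ?_))
    rw [← hstep n t hs ((D.inst_subset_res n).trans hres)]
    exact (D.inst_succ_of_some hs ▸ Set.subset_union_right).trans (D.inst_subset_res (n + 1))
  · push Not at hfired
    exact Or.inl (D.res_eq_of_forall_none fun n => Option.eq_none_iff_forall_ne_some.2 (hfired n))

end Rounds

section Steps

variable {M : TCM} {X : ChaseVariant}

structure ChainInv (M : TCM) (X : ChaseVariant) (k : ℕ) (J : Set Atom) : Prop where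
  shape : Shape M k J
  exOut_subset : ∀ j < k, exOut M (chain M j) ⊆ J
  ChX_datRules : ChX X (DatRules (RM M)) J = J

lemma StepX_succ (n : ℕ) (I : Set Atom) :
    StepX X M (n + 1) I = ChX X (DatRules (RM M)) (ChX X (NDatRules (RM M)) (StepX X M n I)) :=
  rfl

lemma ChainInv.step {k : ℕ} {J : Set Atom} (h : ChainInv M X k J) :
    ChX X (DatRules (RM M)) (ChX X (NDatRules (RM M)) J) = J ∨
      ChainInv M X (k + 1) (ChX X (DatRules (RM M)) (ChX X (NDatRules (RM M)) J)) := by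
  rcases h.shape.ChX_nDatRules (X := X) h.exOut_subset with hA | hA <;> rw [hA]
  · exact Or.inl h.ChX_datRules
  obtain ⟨hsub, hshape, hfix⟩ := h.shape.union_exOut.ChX_datRules (X := X)
  refine Or.inr ⟨hshape, fun j hj => ?_, hfix⟩
  rcases Nat.lt_succ_iff_lt_or_eq.1 hj with hj | rfl
  · exact (h.exOut_subset j hj).trans (Set.subset_union_left.trans hsub)
  · exact Set.subset_union_right.trans hsub

lemma chainInv_or_stable (n : ℕ) :
    ChainInv M X n (StepX X M n IE) ∨ (0 < n ∧ StepX X M n IE = StepX X M (n - 1) IE) := by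
  induction n with
  | zero =>
    obtain ⟨-, hshape, hfix⟩ := Shape.initial.ChX_datRules (M := M) (X := X)
    exact Or.inl ⟨hshape, fun j hj => absurd hj (Nat.not_lt_zero j), hfix⟩
  | succ n ih =>
    rw [StepX_succ]
    rcases ih with h | ⟨hn, hst⟩
    · exact (h.step.imp_left fun h => ⟨n.succ_pos, h⟩).symm
    · refine Or.inr ⟨n.succ_pos, ?_⟩
      obtain ⟨m, rfl⟩ := Nat.exists_eq_add_one_of_ne_zero hn.ne'
      rw [hst, ← StepX_succ]
      rfl

end Steps


theorem stmt_2_general (M : TCM) (X : ChaseVariant) (n : ℕ)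
    (hne : StepX X M n IE ≠ StepX X M (n - 1) IE) :
    ∃ ts : ℕ → FTerm, ts n = wC ∧
      (∀ i ≤ n, ∀ j ≤ n, ts i = ts j → i = j) ∧
      adom (StepX X M n IE) = {u | ∃ i ≤ n, u = ts i} ∧
      {a ∈ StepX X M n IE | a.1 = pS0} =
        {a : Atom | ∃ i < n, a = (pS0, [ts i, ts (i + 1)])} := by
  have hshape : Shape M n (StepX X M n IE) :=
    ((chainInv_or_stable n).resolve_right fun h => hne h.2).shape
  refine ⟨fun i => chain M (n - i), by simp [chain], fun i hi j hj h => ?_, ?_, ?_⟩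
  · have := chain_injective h
    omega
  · rw [hshape.adom_eq]
    ext u
    constructor
    · rintro ⟨j, hj, rfl⟩
      exact ⟨n - j, Nat.sub_le n j, by dsimp only; rw [Nat.sub_sub_self hj]⟩
    · rintro ⟨i, -, rfl⟩
      exact ⟨n - i, Nat.sub_le n i, rfl⟩
  · rw [hshape.sep_fst_eq_pS0]
    ext a
    constructor
    · rintro ⟨j, hj, rfl⟩
      refine ⟨n - (j + 1), by omega, ?_⟩
      dsimp only
      rw [edge, show n - (n - (j + 1)) = j + 1 by omega, show n - (n - (j + 1) + 1) = j by omega]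
    · rintro ⟨i, hi, rfl⟩
      refine ⟨n - (i + 1), by omega, ?_⟩
      dsimp only
      rw [edge, show n - (i + 1) + 1 = n - i by omega]

/-- the chase from `{End(w)}` is a chain. -/
theorem stmt_2 (M : TCM) (X : ChaseVariant) (n : ℕ) (hn : 0 < n)
    (hne : StepX X M n IE ≠ StepX X M (n - 1) IE) :
    ∃ ts : ℕ → FTerm, ts n = wC ∧
      (∀ i ≤ n, ∀ j ≤ n, ts i = ts j → i = j) ∧
      adom (StepX X M n IE) = {u | ∃ i ≤ n, u = ts i} ∧
      {a ∈ StepX X M n IE | a.1 = pS0} =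
        {a : Atom | ∃ i < n, a = (pS0, [ts i, ts (i + 1)])} :=
  stmt_2_general M X n hne

end
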